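/- Let (x_i, y_i, D_i), i = 1,…,n, be data with D_i ∈ {0,1}, x_i ∈ ℝ^d, y_i ∈ ℝ^q. Fix α_p ∈ ℝ, β ∈ ℝ^d, γ ∈ ℝ and set η_i = α_p + βᵀx_i + γ·(y_iᵀ1). Let v be a random vector in ℝ^q with i.i.d. components having mean 0 and variance 2, with E[|y_iᵀv|³] < ∞ for all i, and define g_i(θ) = E[π(η_i + √θ · y_iᵀv)] for θ ≥ 0. Then the prospective log-likelihood ℓ(θ) = ∑_{i=1}^n [D_i log g_i(θ) + (1−D_i) log(1−g_i(θ))] has right derivative at θ = 0 equal to ∑_{i=1}^n (D_i − π(η_i)) (1 − 2π(η_i)) · y_iᵀy_i. -/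

import Mathlib

/-!
Expand `π` to second order around `ηᵢ`: with `Sᵢ = yᵢᵀv`,
`π(ηᵢ + √θ Sᵢ) = π(ηᵢ) + π'(ηᵢ) √θ Sᵢ + π''(ηᵢ) θ Sᵢ² / 2 + O(θ^{3/2} |Sᵢ|³)`.
Taking expectations, the `√θ` term vanishes because `E Sᵢ = 0`, and `E Sᵢ² = 2 yᵢᵀyᵢ` by
independence, so `gᵢ(θ) = π(ηᵢ) + θ π''(ηᵢ) yᵢᵀyᵢ + O(θ^{3/2})` with
`π'' = π(1 − π)(1 − 2π)`. The chain rule for `D log g + (1 − D) log(1 − g)` multiplies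
`gᵢ'(0⁺)` by `(D − π)/(π(1 − π))`.
-/

open MeasureTheory ProbabilityTheory Real Filter Topology

lemma abs_le_abs_pow_succ_of_abs_deriv_le {f f' : ℝ → ℝ} {k : ℕ}
    (hf : ∀ t, HasDerivAt f (f' t) t) (hf₀ : f 0 = 0) (hf' : ∀ t, |f' t| ≤ |t| ^ k) (u : ℝ) :
    |f u| ≤ |u| ^ (k + 1) := by
  have hmvt := (convex_uIcc (0 : ℝ) u).norm_image_sub_le_of_norm_hasDerivWithin_le
    (fun t _ => (hf t).hasDerivWithinAt) (fun t ht => (hf' t).trans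
      (pow_le_pow_left₀ (abs_nonneg t) (by simpa using Set.abs_sub_left_of_mem_uIcc ht) k))
    Set.left_mem_uIcc Set.right_mem_uIcc
  simpa [hf₀, pow_succ] using hmvt

lemma abs_sub_taylor_two_le {f f₁ f₂ f₃ : ℝ → ℝ} (hf : ∀ x, HasDerivAt f (f₁ x) x)
    (hf₁ : ∀ x, HasDerivAt f₁ (f₂ x) x) (hf₂ : ∀ x, HasDerivAt f₂ (f₃ x) x)
    (hf₃ : ∀ x, |f₃ x| ≤ 1) (a u : ℝ) :
    |f (a + u) - f a - f₁ a * u - f₂ a / 2 * u ^ 2| ≤ |u| ^ 3 := by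
  have shift {g g' : ℝ → ℝ} (hg : ∀ x, HasDerivAt g (g' x) x) (t : ℝ) :
      HasDerivAt (fun t => g (a + t)) (g' (a + t)) t :=
    (hg (a + t)).comp_const_add a t
  have bound₂ : ∀ t, |f₂ (a + t) - f₂ a| ≤ |t| ^ 1 :=
    abs_le_abs_pow_succ_of_abs_deriv_le (k := 0) (fun t => (shift hf₂ t).sub_const _)
      (by simp) (fun t => by simpa using hf₃ (a + t))
  have bound₁ : ∀ t, |f₁ (a + t) - f₁ a - f₂ a * t| ≤ |t| ^ 2 :=
    abs_le_abs_pow_succ_of_abs_deriv_le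
      (fun t => (((shift hf₁ t).sub_const _).sub ((hasDerivAt_id t).const_mul _)).congr_deriv
        (by simp)) (by simp) bound₂
  exact abs_le_abs_pow_succ_of_abs_deriv_le
    (fun t => ((((shift hf t).sub_const _).sub ((hasDerivAt_id t).const_mul _)).sub
      (((hasDerivAt_pow 2 t).const_mul (f₂ a / 2)))).congr_deriv (by simp; ring))
    (by simp) bound₁ u

lemma exp_div_one_add_exp_eq_sigmoid (x : ℝ) : exp x / (1 + exp x) = sigmoid x := by
  rw [sigmoid_def, exp_neg]
  field_simp
  ring

lemma hasDerivAt_sigmoid_mul_one_sub_sigmoid (x : ℝ) :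
    HasDerivAt (fun x => sigmoid x * (1 - sigmoid x))
      (sigmoid x * (1 - sigmoid x) * (1 - 2 * sigmoid x)) x :=
  ((hasDerivAt_sigmoid x).mul ((hasDerivAt_sigmoid x).const_sub 1)).congr_deriv (by ring)

lemma hasDerivAt_sigmoid_second_deriv (x : ℝ) :
    HasDerivAt (fun x => sigmoid x * (1 - sigmoid x) * (1 - 2 * sigmoid x))
      (sigmoid x * (1 - sigmoid x) * (1 - 6 * (sigmoid x * (1 - sigmoid x)))) x :=
  ((hasDerivAt_sigmoid_mul_one_sub_sigmoid x).mul
    (((hasDerivAt_sigmoid x).const_mul 2).const_sub 1)).congr_deriv (by ring)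

lemma abs_sigmoid_third_deriv_le_one (x : ℝ) :
    |sigmoid x * (1 - sigmoid x) * (1 - 6 * (sigmoid x * (1 - sigmoid x)))| ≤ 1 := by
  have hpos : 0 < sigmoid x * (1 - sigmoid x) :=
    mul_pos (sigmoid_pos x) (sub_pos.2 (sigmoid_lt_one x))
  have hle : sigmoid x * (1 - sigmoid x) ≤ 1 / 4 := by nlinarith [sq_nonneg (sigmoid x - 1 / 2)]
  rw [abs_le]
  constructor <;> nlinarith

lemma abs_sigmoid_sub_taylor_two_le (a u : ℝ) :
    |sigmoid (a + u) - sigmoid a - sigmoid a * (1 - sigmoid a) * u -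
      sigmoid a * (1 - sigmoid a) * (1 - 2 * sigmoid a) / 2 * u ^ 2| ≤ |u| ^ 3 :=
  abs_sub_taylor_two_le hasDerivAt_sigmoid hasDerivAt_sigmoid_mul_one_sub_sigmoid
    hasDerivAt_sigmoid_second_deriv abs_sigmoid_third_deriv_le_one a u

section Expansion

variable {Ω : Type*} [MeasurableSpace Ω] {μ : Measure Ω} [IsProbabilityMeasure μ]
  {f : ℝ → ℝ} {a f₁ f₂ : ℝ} {S : Ω → ℝ}

lemma abs_integral_comp_add_mul_sub_taylor_le (hf : Measurable f)
    (htaylor : ∀ u, |f (a + u) - f a - f₁ * u - f₂ / 2 * u ^ 2| ≤ |u| ^ 3)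
    (hS : Integrable S μ) (hS₂ : Integrable (fun ω => S ω ^ 2) μ)
    (hS₃ : Integrable (fun ω => |S ω| ^ 3) μ) (hmean : ∫ ω, S ω ∂μ = 0) (s : ℝ) :
    |(∫ ω, f (a + s * S ω) ∂μ) - f a - f₂ / 2 * s ^ 2 * ∫ ω, S ω ^ 2 ∂μ| ≤
      |s| ^ 3 * ∫ ω, |S ω| ^ 3 ∂μ := by
  set R : Ω → ℝ := fun ω =>
    f (a + s * S ω) - (f a + f₁ * s * S ω + f₂ / 2 * s ^ 2 * S ω ^ 2) with hR
  have hR_le : ∀ ω, |R ω| ≤ |s| ^ 3 * |S ω| ^ 3 := fun ω => by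
    simpa [hR, abs_mul, mul_pow, sub_sub, mul_assoc] using htaylor (s * S ω)
  have hpoly : Integrable (fun ω => f a + f₁ * s * S ω + f₂ / 2 * s ^ 2 * S ω ^ 2) μ :=
    ((integrable_const _).fun_add (hS.const_mul _)).fun_add (hS₂.const_mul _)
  have hRint : Integrable R μ :=
    (hS₃.const_mul _).mono' ((hf.comp_aemeasurable ((hS.aemeasurable.const_mul s).const_add a)
      ).aestronglyMeasurable.sub hpoly.aestronglyMeasurable) (ae_of_all _ hR_le)
  have hsplit : (∫ ω, f (a + s * S ω) ∂μ) =
      f a + f₂ / 2 * s ^ 2 * (∫ ω, S ω ^ 2 ∂μ) + ∫ ω, R ω ∂μ := by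
    have : (fun ω => f (a + s * S ω)) = fun ω =>
        (f a + f₁ * s * S ω + f₂ / 2 * s ^ 2 * S ω ^ 2) + R ω := by
      ext ω; simp [hR]
    rw [this, integral_add hpoly hRint, integral_add ((integrable_const _).fun_add
      (hS.const_mul _)) (hS₂.const_mul _), integral_add (integrable_const _) (hS.const_mul _)]
    simp [integral_const_mul, hmean]
  calc _ = |∫ ω, R ω ∂μ| := by rw [hsplit]; ring_nf
    _ ≤ ∫ ω, |R ω| ∂μ := abs_integral_le_integral_abs
    _ ≤ ∫ ω, |s| ^ 3 * |S ω| ^ 3 ∂μ := integral_mono hRint.abs (hS₃.const_mul _) hR_le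
    _ = |s| ^ 3 * ∫ ω, |S ω| ^ 3 ∂μ := integral_const_mul _ _

lemma hasDerivWithinAt_integral_comp_add_sqrt_mul (hf : Measurable f)
    (htaylor : ∀ u, |f (a + u) - f a - f₁ * u - f₂ / 2 * u ^ 2| ≤ |u| ^ 3)
    (hS : Integrable S μ) (hS₂ : Integrable (fun ω => S ω ^ 2) μ)
    (hS₃ : Integrable (fun ω => |S ω| ^ 3) μ) (hmean : ∫ ω, S ω ∂μ = 0) :
    HasDerivWithinAt (fun θ => ∫ ω, f (a + √θ * S ω) ∂μ) (f₂ / 2 * ∫ ω, S ω ^ 2 ∂μ)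
      (Set.Ioi 0) 0 := by
  set M := ∫ ω, |S ω| ^ 3 ∂μ
  rw [hasDerivWithinAt_iff_tendsto_slope' Set.self_notMem_Ioi, slope_fun_def_field,
    tendsto_iff_norm_sub_tendsto_zero]
  have hsqrt : Tendsto (fun θ : ℝ => √θ * M) (𝓝[>] 0) (𝓝 0) := by
    simpa using ((continuous_sqrt.tendsto 0).mono_left nhdsWithin_le_nhds).mul_const M
  refine squeeze_zero' (Eventually.of_forall fun _ => norm_nonneg _) ?_ hsqrt
  filter_upwards [self_mem_nhdsWithin] with θ (hθ : 0 < θ)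
  have hbound := abs_integral_comp_add_mul_sub_taylor_le hf htaylor hS hS₂ hS₃ hmean √θ
  rw [abs_of_nonneg (sqrt_nonneg θ), sq_sqrt hθ.le] at hbound
  rw [norm_eq_abs, sqrt_zero, sub_zero, div_sub' hθ.ne', abs_div, abs_of_pos hθ,
    div_le_iff₀ hθ]
  simp only [zero_mul, add_zero, integral_const, probReal_univ, one_smul]
  calc _ = |(∫ ω, f (a + √θ * S ω) ∂μ) - f a - f₂ / 2 * θ * ∫ ω, S ω ^ 2 ∂μ| := by ring_nf
    _ ≤ √θ ^ 3 * M := hbound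
    _ = √θ * M * θ := by rw [pow_succ, pow_two, mul_self_sqrt hθ.le]; ring

end Expansion

section Moments

variable {Ω ι : Type*} [MeasurableSpace Ω] {μ : Measure Ω} [Fintype ι] {v : ι → Ω → ℝ}

lemma integral_sum_mul_eq_zero (hv : ∀ j, Integrable (v j) μ) (hmean : ∀ j, ∫ ω, v j ω ∂μ = 0)
    (c : ι → ℝ) : ∫ ω, ∑ j, c j * v j ω ∂μ = 0 := by
  simp [integral_finsetSum _ fun j _ => (hv j).const_mul (c j), integral_const_mul, hmean]

lemma integral_sq_sum_mul_eq [IsProbabilityMeasure μ] (hv : ∀ j, MemLp (v j) 2 μ)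
    (hindep : Pairwise fun i j => IndepFun (v i) (v j) μ) (hmean : ∀ j, ∫ ω, v j ω ∂μ = 0)
    (c : ι → ℝ) : ∫ ω, (∑ j, c j * v j ω) ^ 2 ∂μ = ∑ j, c j ^ 2 * ∫ ω, v j ω ^ 2 ∂μ := by
  have hsum : (∑ j, fun ω => c j * v j ω) = fun ω => ∑ j, c j * v j ω := by
    ext ω; simp
  have hS := memLp_finsetSum Finset.univ fun j _ => (hv j).const_mul (c j)
  rw [← variance_of_integral_eq_zero hS.aestronglyMeasurable.aemeasurable
      (integral_sum_mul_eq_zero (fun j => (hv j).integrable one_le_two) hmean c),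
    ← hsum, IndepFun.variance_sum (fun j _ => (hv j).const_mul (c j))
      fun i _ j _ hij => (hindep hij).comp (measurable_const_mul _) (measurable_const_mul _)]
  simp only [variance_const_mul,
    variance_of_integral_eq_zero (hv _).aestronglyMeasurable.aemeasurable (hmean _)]

end Moments

lemma HasDerivWithinAt.bernoulli_logLikelihood {g : ℝ → ℝ} {g' x : ℝ} {s : Set ℝ} (D : ℝ)
    (hg : HasDerivWithinAt g g' s x) (hg₀ : 0 < g x) (hg₁ : g x < 1) :
    HasDerivWithinAt (fun θ => D * Real.log (g θ) + (1 - D) * Real.log (1 - g θ))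
      ((D - g x) / (g x * (1 - g x)) * g') s x := by
  have h₁ : 1 - g x ≠ 0 := (sub_pos.2 hg₁).ne'
  refine (((hg.log hg₀.ne').const_mul D).add
    (((hg.const_sub 1).log h₁).const_mul (1 - D))).congr_deriv ?_
  field_simp
  ring

theorem prospective_score_right_derivative_general
    (pi : ℝ → ℝ) (hpi : ∀ s, pi s = Real.exp s / (1 + Real.exp s))
    {Ω : Type*} [MeasurableSpace Ω] (μ : Measure Ω) [IsProbabilityMeasure μ]
    {q : ℕ} (v : Fin q → Ω → ℝ)
    (hmeas : ∀ j, Measurable (v j))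
    (hindep : iIndepFun v μ)
    (hmean : ∀ j, ∫ ω, v j ω ∂μ = 0)
    (hvar : ∀ j, ∫ ω, (v j ω) ^ 2 ∂μ = 2)
    {n : ℕ} (y : Fin n → (Fin q → ℝ))
    (D : Fin n → ℝ)
    (η : Fin n → ℝ)
    (hthird : ∀ i, Integrable (fun ω => |∑ j, y i j * v j ω| ^ 3) μ)
    (g : Fin n → ℝ → ℝ)
    (hg : ∀ i θ, g i θ = ∫ ω, pi (η i + Real.sqrt θ * ∑ j, y i j * v j ω) ∂μ)
    (ℓ : ℝ → ℝ)
    (hℓ : ∀ θ, ℓ θ = ∑ i, (D i * Real.log (g i θ) + (1 - D i) * Real.log (1 - g i θ))) :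
    Tendsto (fun θ => (ℓ θ - ℓ 0) / θ) (nhdsWithin 0 (Set.Ioi 0))
      (nhds (∑ i, (D i - pi (η i)) * (1 - 2 * pi (η i)) * ∑ j, (y i j) ^ 2)) := by
  obtain rfl : pi = sigmoid := funext fun s => (hpi s).trans (exp_div_one_add_exp_eq_sigmoid s)
  have hv : ∀ j, MemLp (v j) 2 μ := fun j =>
    (memLp_two_iff_integrable_sq (hmeas j).aestronglyMeasurable).2
      (Integrable.of_integral_ne_zero (by norm_num [hvar j]))
  have hg₀ : ∀ i, g i 0 = sigmoid (η i) := fun i => by simp [hg]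
  have hg' : ∀ i, HasDerivWithinAt (g i)
      (sigmoid (η i) * (1 - sigmoid (η i)) * (1 - 2 * sigmoid (η i)) * ∑ j, y i j ^ 2)
      (Set.Ioi 0) 0 := fun i => by
    have hS := memLp_finsetSum Finset.univ fun j _ => (hv j).const_mul (y i j)
    have h := hasDerivWithinAt_integral_comp_add_sqrt_mul continuous_sigmoid.measurable
      (abs_sigmoid_sub_taylor_two_le (η i)) (hS.integrable one_le_two) hS.integrable_sq
      (hthird i) (integral_sum_mul_eq_zero (fun j => (hv j).integrable one_le_two) hmean (y i))
    rw [integral_sq_sum_mul_eq hv (fun j k hjk => hindep.indepFun hjk) hmean] at h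
    rw [funext (hg i)]
    convert h using 1
    simp only [hvar, Finset.mul_sum]
    exact Finset.sum_congr rfl fun j _ => by ring
  have hℓ' := HasDerivWithinAt.fun_sum fun i (_ : i ∈ Finset.univ) =>
    (hg' i).bernoulli_logLikelihood (D i) (hg₀ i ▸ sigmoid_pos _) (hg₀ i ▸ sigmoid_lt_one _)
  rw [← funext hℓ, hasDerivWithinAt_iff_tendsto_slope' Set.self_notMem_Ioi,
    slope_fun_def_field] at hℓ'
  convert hℓ' using 2 with θ
  · simp
  · refine Finset.sum_congr rfl fun i _ => ?_
    have h₀ := (sigmoid_pos (η i)).ne'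
    have h₁ := (sub_pos.2 (sigmoid_lt_one (η i))).ne'
    rw [hg₀]
    field_simp

/-- The prospective log-likelihood `ℓ(θ) = ∑ᵢ [Dᵢ log gᵢ(θ) + (1−Dᵢ) log(1−gᵢ(θ))]`,
with `gᵢ(θ) = E[π(ηᵢ + √θ·yᵢᵀv)]` for the logistic function `π` and a random vector `v`
with i.i.d. components of mean `0` and variance `2` (and `E[|yᵢᵀv|³] < ∞`),
has right derivative at `θ = 0` equal to
`∑ᵢ (Dᵢ − π(ηᵢ))(1 − 2π(ηᵢ)) · yᵢᵀyᵢ`. -/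
theorem prospective_score_right_derivative
    (pi : ℝ → ℝ) (hpi : ∀ s, pi s = Real.exp s / (1 + Real.exp s))
    {Ω : Type*} [MeasurableSpace Ω] (μ : Measure Ω) [IsProbabilityMeasure μ]
    {q : ℕ} (v : Fin q → Ω → ℝ)
    (hmeas : ∀ j, Measurable (v j))
    (hindep : iIndepFun v μ)
    (hident : ∀ i j, μ.map (v i) = μ.map (v j))
    (hmean : ∀ j, ∫ ω, v j ω ∂μ = 0)
    (hvar : ∀ j, ∫ ω, (v j ω) ^ 2 ∂μ = 2)
    {d n : ℕ} (x : Fin n → (Fin d → ℝ)) (y : Fin n → (Fin q → ℝ))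
    (D : Fin n → ℝ) (hD : ∀ i, D i = 0 ∨ D i = 1)
    (α_p : ℝ) (β : Fin d → ℝ) (γ : ℝ)
    (η : Fin n → ℝ)
    (hη : ∀ i, η i = α_p + (∑ a, β a * x i a) + γ * ∑ j, y i j)
    (hthird : ∀ i, Integrable (fun ω => |∑ j, y i j * v j ω| ^ 3) μ)
    (g : Fin n → ℝ → ℝ)
    (hg : ∀ i θ, g i θ = ∫ ω, pi (η i + Real.sqrt θ * ∑ j, y i j * v j ω) ∂μ)
    (ℓ : ℝ → ℝ)
    (hℓ : ∀ θ, ℓ θ = ∑ i, (D i * Real.log (g i θ) + (1 - D i) * Real.log (1 - g i θ))) :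
    Tendsto (fun θ => (ℓ θ - ℓ 0) / θ) (nhdsWithin 0 (Set.Ioi 0))
      (nhds (∑ i, (D i - pi (η i)) * (1 - 2 * pi (η i)) * ∑ j, (y i j) ^ 2)) :=
  prospective_score_right_derivative_general pi hpi μ v hmeas hindep hmean hvar y D η hthird g hg ℓ
    hℓ
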